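/- arXiv:math/0509488 — 12 statements merged into one kernel-verified Lean document; each statement's English description precedes it below -/
import Mathlib

section
/- (Generalized root-dragging) If r_k' > r_k for all k = 1, ..., N, then the unique critical point x_k' of q in (r_k', r_{k+1}') satisfies x_k' > x_k, where x_k is the unique critical point of p in (r_k, r_{k+1}), for each k = 1, ..., N-1. -/
/-- Generalized root-dragging theorem: if every root moves to the right, then
every critical point (root of the logarithmic derivative) moves to the right. -/
theorem stmt_1 (N : ℕ) (hN : 2 ≤ N) (m : Fin N → ℝ) (hm : ∀ i, 0 < m i)
    (r r' : Fin N → ℝ) (hr : StrictMono r) (hr' : StrictMono r')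
    (hdrag : ∀ i, r i < r' i)
    (x x' : Fin (N - 1) → ℝ)
    (hx : ∀ k : Fin (N - 1),
      x k ∈ Set.Ioo (r ⟨k, by have := k.isLt; omega⟩)
          (r ⟨k + 1, by have := k.isLt; omega⟩) ∧
        ∑ i, m i / (x k - r i) = 0)
    (hx' : ∀ k : Fin (N - 1),
      x' k ∈ Set.Ioo (r' ⟨k, by have := k.isLt; omega⟩)
          (r' ⟨k + 1, by have := k.isLt; omega⟩) ∧
        ∑ i, m i / (x' k - r' i) = 0) :
    ∀ k, x k < x' k := by
  intro k
  by_contra hcon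
  push_neg at hcon
  obtain ⟨⟨hx1, hx2⟩, hxs⟩ := hx k
  obtain ⟨⟨hx1', hx2'⟩, hxs'⟩ := hx' k
  have key : ∀ i : Fin N, m i / (x k - r i) < m i / (x' k - r' i) := by
    intro i
    have hd := hdrag i
    have hab : x' k - r' i < x k - r i := by linarith
    rcases le_or_gt (i : ℕ) (k : ℕ) with hik | hik
    · -- both differences positive
      have h1 : r' i ≤ r' ⟨k, by have := k.isLt; omega⟩ :=
        hr'.monotone (by simpa [Fin.le_def] using hik)
      have hpos : 0 < x' k - r' i := by linarith
      exact div_lt_div_of_pos_left (hm i) hpos hab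
    · -- both differences negative
      have h1 : r ⟨k + 1, by have := k.isLt; omega⟩ ≤ r i :=
        hr.monotone (by simpa [Fin.le_def] using hik)
      have hneg : x k - r i < 0 := by linarith
      have h2 : m i / (-(x' k - r' i)) < m i / (-(x k - r i)) :=
        div_lt_div_of_pos_left (hm i) (by linarith) (by linarith)
      rw [div_neg, div_neg, neg_lt_neg_iff] at h2
      exact h2
  have hne : (Finset.univ : Finset (Fin N)).Nonempty := ⟨⟨0, by omega⟩, Finset.mem_univ _⟩
  have : (0 : ℝ) < 0 := by
    calc (0 : ℝ) = ∑ i, m i / (x k - r i) := hxs.symm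
      _ < ∑ i, m i / (x' k - r' i) :=
        Finset.sum_lt_sum_of_nonempty hne fun i _ => key i
      _ = 0 := hxs'
  exact lt_irrefl 0 this
end

section
/- If s = m_1 + ⋯ + m_k and the roots r_1, ..., r_{k-1} coincide with r_k while r_{k+2}, ..., r_N all equal b, then as b → ∞ the critical point x_k in (r_k, r_{k+1}) increases monotonically to (s·r_{k+1} + m_{k+1}·r_k)/(m_{k+1} + s); i.e., for q_b(x) = (x-r_k)^s (x-r_{k+1})^{m_{k+1}} (x-b)^t with t > 0, the smallest root of t(x-r_{k+1})(x-r_k) + m_{k+1}(x-r_k)(x-b) + s(x-r_{k+1})(x-b) tends increasingly to (s·r_{k+1} + m_{k+1}·r_k)/(m_{k+1}+s) as b → ∞. -/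
set_option maxHeartbeats 1600000

open Filter

/-- As `b → ∞`, the smallest root of
`t(x-r_{k+1})(x-r_k) + m_{k+1}(x-r_k)(x-b) + s(x-r_{k+1})(x-b)`
increases monotonically to `(s r_{k+1} + m_{k+1} r_k)/(m_{k+1}+s)`. -/
theorem stmt_3 (s t mk1 rk rk1 : ℝ) (hs : 0 < s) (ht : 0 < t) (hm : 0 < mk1)
    (hrk : rk < rk1) (x : ℝ → ℝ)
    (hroot : ∀ b, rk1 < b →
      (t * (x b - rk1) * (x b - rk) + mk1 * (x b - rk) * (x b - b) +
          s * (x b - rk1) * (x b - b) = 0 ∧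
        ∀ y : ℝ, t * (y - rk1) * (y - rk) + mk1 * (y - rk) * (y - b) +
            s * (y - rk1) * (y - b) = 0 → x b ≤ y)) :
    StrictMonoOn x (Set.Ioi rk1) ∧
    (∀ b ∈ Set.Ioi rk1, x b < (s * rk1 + mk1 * rk) / (mk1 + s)) ∧
    Tendsto x atTop (nhds ((s * rk1 + mk1 * rk) / (mk1 + s))) := by
  set X := (s * rk1 + mk1 * rk) / (mk1 + s) with hXdef
  have hms : 0 < mk1 + s := by linarith
  have hXeq : (mk1 + s) * X = s * rk1 + mk1 * rk := by
    rw [hXdef]; field_simp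
  have hX1 : rk < X := by nlinarith
  have hX2 : X < rk1 := by nlinarith
  -- value of the quadratic at X
  have hfX : ∀ b, rk1 < b →
      t * (X - rk1) * (X - rk) + mk1 * (X - rk) * (X - b) + s * (X - rk1) * (X - b) < 0 := by
    intro b hb
    have h0 : mk1 * (X - rk) + s * (X - rk1) = 0 := by nlinarith
    nlinarith [mul_pos (sub_pos.mpr hX2) (sub_pos.mpr hX1)]
  have hlow : ∀ b, rk1 < b → rk < x b := by
    intro b hb
    obtain ⟨heq, _⟩ := hroot b hb
    by_contra h
    push_neg at h
    have e1 : x b - rk1 < 0 := by linarith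
    have e2 : x b - rk ≤ 0 := by linarith
    have e3 : x b - b < 0 := by linarith
    have p1 : 0 ≤ t * ((rk1 - x b) * (rk - x b)) :=
      mul_nonneg ht.le (mul_nonneg (by linarith) (by linarith))
    have p2 : 0 ≤ mk1 * ((rk - x b) * (b - x b)) :=
      mul_nonneg hm.le (mul_nonneg (by linarith) (by linarith))
    have p3 : 0 < s * ((x b - rk1) * (x b - b)) := mul_pos hs (mul_pos_of_neg_of_neg e1 e3)
    nlinarith [p1, p2, p3]
  have hupp : ∀ b, rk1 < b → x b < X := by
    intro b hb
    obtain ⟨_, hmin⟩ := hroot b hb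
    have hcont : ContinuousOn
        (fun y => t * (y - rk1) * (y - rk) + mk1 * (y - rk) * (y - b) + s * (y - rk1) * (y - b))
        (Set.Icc rk X) := by fun_prop
    have hIV := intermediate_value_Ioo' hX1.le hcont
    have hfrk : 0 < t * (rk - rk1) * (rk - rk) + mk1 * (rk - rk) * (rk - b) + s * (rk - rk1) * (rk - b) := by
      nlinarith [mul_pos hs (mul_pos (sub_pos.mpr hrk) (sub_pos.mpr (hrk.trans hb)))]
    have h0mem : (0 : ℝ) ∈ Set.Ioo
        (t * (X - rk1) * (X - rk) + mk1 * (X - rk) * (X - b) + s * (X - rk1) * (X - b))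
        (t * (rk - rk1) * (rk - rk) + mk1 * (rk - rk) * (rk - b) + s * (rk - rk1) * (rk - b)) :=
      ⟨hfX b hb, hfrk⟩
    obtain ⟨y, hy, hy0⟩ := hIV h0mem
    exact lt_of_le_of_lt (hmin y (by simpa using hy0)) hy.2
  have hmono : StrictMonoOn x (Set.Ioi rk1) := by
    intro b1 hb1 b2 hb2 hlt
    simp only [Set.mem_Ioi] at hb1 hb2
    obtain ⟨heq1, _⟩ := hroot b1 hb1
    obtain ⟨heq2, _⟩ := hroot b2 hb2
    have hu1 := hupp b1 hb1
    -- Q_{b2}(x b1) > 0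
    have hQ2pos : 0 < t * (x b1 - rk1) * (x b1 - rk) + mk1 * (x b1 - rk) * (x b1 - b2)
        + s * (x b1 - rk1) * (x b1 - b2) := by
      have hL : mk1 * (x b1 - rk) + s * (x b1 - rk1) = (mk1 + s) * (x b1 - X) := by
        nlinarith
      nlinarith [mul_pos hms (sub_pos.mpr hu1), mul_pos (sub_pos.mpr hlt) (mul_pos hms (sub_pos.mpr hu1))]
    by_contra h
    push_neg at h
    -- h : x b2 ≤ x b1
    have hu2 : x b2 < X := lt_of_le_of_lt h hu1
    have hQ2X := hfX b2 hb2
    have hid : (X - x b1) * (t * (x b2 - rk1) * (x b2 - rk) + mk1 * (x b2 - rk) * (x b2 - b2)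
          + s * (x b2 - rk1) * (x b2 - b2))
        + (x b1 - x b2) * (t * (X - rk1) * (X - rk) + mk1 * (X - rk) * (X - b2)
          + s * (X - rk1) * (X - b2))
        - (X - x b2) * (t * (x b1 - rk1) * (x b1 - rk) + mk1 * (x b1 - rk) * (x b1 - b2)
          + s * (x b1 - rk1) * (x b1 - b2))
        = (t + mk1 + s) * ((X - x b1) * (x b1 - x b2) * (X - x b2)) := by ring
    rw [heq2] at hid
    nlinarith [mul_nonneg (mul_nonneg (sub_pos.mpr hu1).le (sub_nonneg.mpr h)) (sub_pos.mpr hu2).le,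
      mul_pos (sub_pos.mpr hu2) hQ2pos, mul_nonpos_of_nonneg_of_nonpos (sub_nonneg.mpr h) hQ2X.le]
  refine ⟨hmono, fun b hb => hupp b hb, ?_⟩
  -- limit
  have hbound : ∀ b, rk1 < b →
      X - t * (rk1 - rk) ^ 2 / ((b - rk1) * (mk1 + s)) ≤ x b := by
    intro b hb
    have hu := hupp b hb
    have hl := hlow b hb
    obtain ⟨heq, _⟩ := hroot b hb
    have hden : 0 < (b - rk1) * (mk1 + s) := mul_pos (sub_pos.mpr hb) hms
    have hkey : (b - x b) * ((mk1 + s) * (X - x b)) = t * (rk1 - x b) * (x b - rk) := by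
      nlinarith
    have hA : 0 ≤ (X - x b) * ((rk1 - x b) * (mk1 + s)) :=
      mul_nonneg (by linarith) (mul_nonneg (by linarith [hu.trans hX2]) hms.le)
    have hB : t * (rk1 - x b) * (x b - rk) ≤ t * (rk1 - rk) ^ 2 := by
      nlinarith [mul_nonneg ht.le (sq_nonneg (rk1 - x b)), mul_nonneg ht.le (sq_nonneg (x b - rk)),
        mul_nonneg ht.le (mul_nonneg (sub_nonneg.mpr (hu.trans hX2).le) (sub_nonneg.mpr hl.le))]
    have hmul : (X - x b) * ((b - rk1) * (mk1 + s)) ≤ t * (rk1 - rk) ^ 2 := by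
      nlinarith [hkey, hA, hB]
    have hdiv := (le_div_iff₀ hden).mpr hmul
    linarith
  have hg : Tendsto (fun b => X - t * (rk1 - rk) ^ 2 / ((b - rk1) * (mk1 + s))) atTop (nhds X) := by
    have hden : Tendsto (fun b : ℝ => (b - rk1) * (mk1 + s)) atTop atTop :=
      (tendsto_atTop_add_const_right _ (-rk1) tendsto_id).atTop_mul_const hms
    have h0 : Tendsto (fun b : ℝ => t * (rk1 - rk) ^ 2 / ((b - rk1) * (mk1 + s))) atTop (nhds 0) :=
      Tendsto.div_atTop tendsto_const_nhds hden
    simpa using tendsto_const_nhds.sub h0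
  refine tendsto_of_tendsto_of_tendsto_of_le_of_le' hg tendsto_const_nhds ?_ ?_
  · filter_upwards [eventually_gt_atTop rk1] with b hb using hbound b hb
  · filter_upwards [eventually_gt_atTop rk1] with b hb using (hupp b hb).le
end

section
/- (Sufficiency for N = 3) If u is a real number with m_1/n < u < m_1/(m_1+m_2) and v = m_2/(n(1-u)), then (u, v) is a ratio vector: there exist real numbers r_1 < r_2 < r_3 such that the ratios of p(x) = (x-r_1)^{m_1}(x-r_2)^{m_2}(x-r_3)^{m_3} are exactly (σ_1, σ_2) = (u, v). In fact one may take r_1 = 0, r_2 = 1, r_3 = u((1-u)n - m_2)/(m_1 - (m_1+m_2)u). -/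
/-!
Put the roots at `0 < 1 < r`. Off the roots, clearing denominators turns the equation
`m₁/x + m₂/(x-1) + m₃/(x-r) = 0` into the quadratic `m₁(x-1)(x-r) + m₂x(x-r) + m₃x(x-1) = 0`,
which is linear in `r`; the given `r` is the one that makes `u` a root. Its other root is
`1 + v(r-1)`, as one checks against the relations `r(m₁ - (m₁+m₂)u) = u((1-u)n - m₂)` and
`v n (1-u) = m₂`, and the hypotheses on `u` are what place `r > 1` and `0 < v < 1`.
-/

open Set

theorem div_sub_add_div_sub_add_div_sub_eq_zero_iff {K : Type*} [Field K] {a b c x : K}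
    (m₁ m₂ m₃ : K) (ha : x ≠ a) (hb : x ≠ b) (hc : x ≠ c) :
    m₁ / (x - a) + m₂ / (x - b) + m₃ / (x - c) = 0 ↔
      m₁ * (x - b) * (x - c) + m₂ * (x - a) * (x - c) + m₃ * (x - a) * (x - b) = 0 := by
  have ha' := sub_ne_zero.2 ha
  have hb' := sub_ne_zero.2 hb
  have hc' := sub_ne_zero.2 hc
  have : m₁ / (x - a) + m₂ / (x - b) + m₃ / (x - c) =
      (m₁ * (x - b) * (x - c) + m₂ * (x - a) * (x - c) + m₃ * (x - a) * (x - b)) /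
        ((x - a) * (x - b) * (x - c)) := by
    field_simp
  rw [this, div_eq_zero_iff, or_iff_left (by positivity)]

theorem one_lt_of_mul_eq {m₁ m₂ m₃ u r : ℝ} (hu : u < 1) (hN : m₁ < u * (m₁ + m₂ + m₃))
    (hD : 0 < m₁ - (m₁ + m₂) * u)
    (hr : r * (m₁ - (m₁ + m₂) * u) = u * ((1 - u) * (m₁ + m₂ + m₃) - m₂)) : 1 < r := by
  have h : (r - 1) * (m₁ - (m₁ + m₂) * u) = (1 - u) * (u * (m₁ + m₂ + m₃) - m₁) := by
    linear_combination hr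
  have := (pos_iff_pos_of_mul_pos (h ▸ mul_pos (sub_pos.2 hu) (sub_pos.2 hN))).2 hD
  linarith

/-- Sufficiency for `N = 3`: if `m₁/n < u < m₁/(m₁+m₂)` and `v = m₂/(n(1-u))`,
then `(u,v)` is a ratio vector, realized by roots `0 < 1 < r` with
`r = u((1-u)n - m₂)/(m₁ - (m₁+m₂)u)`. -/
theorem stmt_5 (m1 m2 m3 : ℝ) (hm1 : 0 < m1) (hm2 : 0 < m2) (hm3 : 0 < m3)
    (n : ℝ) (hn : n = m1 + m2 + m3)
    (u v : ℝ) (hu1 : m1 / n < u) (hu2 : u < m1 / (m1 + m2))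
    (hv : v = m2 / (n * (1 - u))) :
    ∃ r : ℝ, r = u * ((1 - u) * n - m2) / (m1 - (m1 + m2) * u) ∧ 1 < r ∧
      ∃ x1 x2 : ℝ, x1 ∈ Set.Ioo (0 : ℝ) 1 ∧ x2 ∈ Set.Ioo 1 r ∧
        m1 / (x1 - 0) + m2 / (x1 - 1) + m3 / (x1 - r) = 0 ∧
        m1 / (x2 - 0) + m2 / (x2 - 1) + m3 / (x2 - r) = 0 ∧
        (x1 - 0) / (1 - 0) = u ∧ (x2 - 1) / (r - 1) = v := by
  subst hn
  have hN : m1 < u * (m1 + m2 + m3) := (div_lt_iff₀ (by positivity)).1 hu1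
  have hD : 0 < m1 - (m1 + m2) * u := by linarith [(lt_div_iff₀ (by positivity)).1 hu2]
  have hu0 : 0 < u := by nlinarith
  have hu1 : u < 1 := by nlinarith
  have hm2u : m2 < (m1 + m2 + m3) * (1 - u) := by nlinarith
  set r := u * ((1 - u) * (m1 + m2 + m3) - m2) / (m1 - (m1 + m2) * u)
  have hr : r * (m1 - (m1 + m2) * u) = u * ((1 - u) * (m1 + m2 + m3) - m2) :=
    div_mul_cancel₀ _ hD.ne'
  have hv' : v * ((m1 + m2 + m3) * (1 - u)) = m2 := hv ▸ div_mul_cancel₀ _ (by linarith)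
  have hr1 : 1 < r := one_lt_of_mul_eq hu1 hN hD hr
  have hv0 : 0 < v := hv ▸ div_pos hm2 (by linarith)
  have hv1 : v < 1 := hv ▸ (div_lt_one (by linarith)).2 hm2u
  set x2 := 1 + v * (r - 1) with hx2
  refine ⟨r, rfl, hr1, u, x2, ⟨hu0, hu1⟩, ⟨by nlinarith, by nlinarith⟩, ?_, ?_, by simp, ?_⟩
  · rw [div_sub_add_div_sub_add_div_sub_eq_zero_iff _ _ _ hu0.ne' hu1.ne (by linarith)]
    linear_combination hr
  · rw [div_sub_add_div_sub_add_div_sub_eq_zero_iff _ _ _ (by nlinarith) (by nlinarith)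
      (by nlinarith)]
    -- `hv'` is polynomial only in `v * (1 - u)`, so check the quadratic times `1 - u`.
    refine mul_left_cancel₀ (sub_pos.2 hu1).ne' ?_
    linear_combination (1 - x2) * hr + (x2 - u) * (r - 1) * hv'
  · rw [hx2, add_sub_cancel_left, mul_div_cancel_right₀ _ (sub_pos.2 hr1).ne']
end

section
/- For N = 3 with roots 0 = r_1 < 1 = r_2 < r = r_3, the ratios are given explicitly by σ_1 = 1 + ((n - m_3)r - n - m_2 - √A)/(2n) and σ_2 = ((n - m_3)r - n - m_2 + √A)/(2n(r-1)), where A = (m_1+m_2)^2 r^2 + 2(m_2 m_3 - m_1 n) r + (m_1+m_3)^2. -/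
/-- Explicit expressions for the ratios when the roots are `0 < 1 < r`. -/
theorem stmt_7 (m1 m2 m3 : ℝ) (hm1 : 0 < m1) (hm2 : 0 < m2) (hm3 : 0 < m3)
    (n : ℝ) (hn : n = m1 + m2 + m3) (r : ℝ) (hr : 1 < r)
    (x1 x2 : ℝ) (hx1 : x1 ∈ Set.Ioo (0 : ℝ) 1) (hx2 : x2 ∈ Set.Ioo 1 r)
    (hc1 : m1 / x1 + m2 / (x1 - 1) + m3 / (x1 - r) = 0)
    (hc2 : m1 / x2 + m2 / (x2 - 1) + m3 / (x2 - r) = 0)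
    (σ1 σ2 : ℝ) (hσ1 : σ1 = x1) (hσ2 : σ2 = (x2 - 1) / (r - 1))
    (A : ℝ) (hA : A = (m1 + m2) ^ 2 * r ^ 2 + 2 * (m2 * m3 - m1 * n) * r + (m1 + m3) ^ 2) :
    σ1 = 1 + ((n - m3) * r - n - m2 - Real.sqrt A) / (2 * n) ∧
    σ2 = ((n - m3) * r - n - m2 + Real.sqrt A) / (2 * n * (r - 1)) := by
  obtain ⟨h10, h11⟩ := hx1
  obtain ⟨h21, h2r⟩ := hx2
  have hn0 : 0 < n := by linarith
  have hr0 : (0:ℝ) < r - 1 := by linarith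
  have hx1ne : x1 ≠ 0 := ne_of_gt h10
  have hx1ne1 : x1 - 1 ≠ 0 := by intro h; linarith [sub_eq_zero.mp h]
  have hx1ner : x1 - r ≠ 0 := by intro h; nlinarith [sub_eq_zero.mp h]
  have hx2ne : x2 ≠ 0 := by positivity
  have hx2ne1 : x2 - 1 ≠ 0 := by intro h; nlinarith [sub_eq_zero.mp h]
  have hx2ner : x2 - r ≠ 0 := by intro h; nlinarith [sub_eq_zero.mp h]
  have q1 : n * x1 ^ 2 - ((m1 + m2) * r + m1 + m3) * x1 + m1 * r = 0 := by
    field_simp at hc1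
    subst hn; nlinarith [hc1, sq_nonneg x1]
  have q2 : n * x2 ^ 2 - ((m1 + m2) * r + m1 + m3) * x2 + m1 * r = 0 := by
    field_simp at hc2
    subst hn; nlinarith [hc2, sq_nonneg x2]
  have hx12 : x1 < x2 := by linarith
  have hsum : n * (x1 + x2) = (m1 + m2) * r + m1 + m3 := by
    have h : (x1 - x2) * (n * (x1 + x2) - ((m1 + m2) * r + m1 + m3)) = 0 := by
      linear_combination q1 - q2
    rcases mul_eq_zero.mp h with h | h
    · exact absurd h (by intro h'; linarith [sub_eq_zero.mp h'])
    · linarith [sub_eq_zero.mp h]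
  have hprod : n * (x1 * x2) = m1 * r := by
    linear_combination x1 * hsum - q1
  have hA' : A = (n * (x2 - x1)) ^ 2 := by
    rw [hA]
    linear_combination 2 * r * m1 * hn - ((m1 + m2) * r + m1 + m3 + n * (x1 + x2)) * hsum + 4 * n * hprod
  have hsqrt : Real.sqrt A = n * (x2 - x1) := by
    rw [hA']
    exact Real.sqrt_sq (mul_nonneg hn0.le (by linarith))
  constructor
  · rw [hσ1, hsqrt]
    field_simp
    linear_combination hsum - (1 + r) * hn
  · rw [hσ2, hsqrt]
    have hd : (2 * n * (r - 1)) ≠ 0 := ne_of_gt (by positivity)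
    rw [div_eq_div_iff (by linarith) hd]
    linear_combination (r - 1) * hsum + ((r - 1) * (1 - r) + 2 * (1 - r)) * hn
end

section
/- For N = 3, σ_1 < σ_2 holds for all r > 1 if and only if h(r) > 0 for all r > 1, where h(r) = (m_2^2 + m_1(m_2 - m_3)) r^2 + m_2(m_3 - m_2 - m_1) r + m_2^2. -/
private lemma frac_iff (n x y r : ℝ) (hn : 0 < n) (hr : 1 < r) :
    (1 + x / (2*n) < y / (2*n*(r-1))) ↔ 2*n*(r-1) + (r-1)*x < y := by
  have h1 : (0:ℝ) < 2*n*(r-1) := by nlinarith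
  have e : x/(2*n)*(2*n*(r-1)) = x*(r-1) := by field_simp
  rw [lt_div_iff₀ h1, add_mul, one_mul, e]
  constructor <;> intro <;> nlinarith

private lemma Lneg_h (m1 m2 m3 r : ℝ) (hm1 : 0 < m1) (hm2 : 0 < m2) (hm3 : 0 < m3)
    (hr : 1 < r)
    (hL : (m1+m2)*r^2 + (m3-m1-2*m2)*r + 2*m2 < 0) :
    (m2^2 + m1*(m2-m3))*r^2 + m2*(m3-m2-m1)*r + m2^2 > 0 := by
  have hr0 : (0:ℝ) < r := by linarith
  nlinarith [mul_pos hm1 hm3, mul_pos hm1 hm2, mul_pos hm2 hm3,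
    mul_neg_of_neg_of_pos hL hm2, mul_neg_of_neg_of_pos hL (mul_pos hm1 hr0),
    mul_neg_of_neg_of_pos hL (sub_pos.mpr hr), sq_nonneg (m2*r - m2),
    mul_pos hm2 (sub_pos.mpr hr), mul_pos (mul_pos hm1 hm3) (mul_pos hr0 hr0),
    mul_neg_of_neg_of_pos hL (mul_pos hm2 hr0)]

/-- With the explicit formulas for the ratios, `σ₁ < σ₂` for all `r > 1` iff
`h(r) > 0` for all `r > 1`, where
`h(r) = (m₂² + m₁(m₂-m₃)) r² + m₂(m₃-m₂-m₁) r + m₂²`. -/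
theorem stmt_9 (m1 m2 m3 : ℝ) (hm1 : 0 < m1) (hm2 : 0 < m2) (hm3 : 0 < m3)
    (n : ℝ) (hn : n = m1 + m2 + m3) :
    (∀ r : ℝ, 1 < r →
      1 + ((n - m3) * r - n - m2 -
            Real.sqrt ((m1 + m2) ^ 2 * r ^ 2 + 2 * (m2 * m3 - m1 * n) * r +
              (m1 + m3) ^ 2)) / (2 * n) <
        ((n - m3) * r - n - m2 +
            Real.sqrt ((m1 + m2) ^ 2 * r ^ 2 + 2 * (m2 * m3 - m1 * n) * r +
              (m1 + m3) ^ 2)) / (2 * n * (r - 1))) ↔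
    (∀ r : ℝ, 1 < r →
      (m2 ^ 2 + m1 * (m2 - m3)) * r ^ 2 + m2 * (m3 - m2 - m1) * r + m2 ^ 2 > 0) := by
  subst hn
  have hn0 : (0:ℝ) < m1 + m2 + m3 := by linarith
  have key : ∀ r : ℝ, 1 < r →
      ((1 + ((m1 + m2 + m3 - m3) * r - (m1 + m2 + m3) - m2 -
            Real.sqrt ((m1 + m2) ^ 2 * r ^ 2 + 2 * (m2 * m3 - m1 * (m1 + m2 + m3)) * r +
              (m1 + m3) ^ 2)) / (2 * (m1 + m2 + m3)) <
        ((m1 + m2 + m3 - m3) * r - (m1 + m2 + m3) - m2 +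
            Real.sqrt ((m1 + m2) ^ 2 * r ^ 2 + 2 * (m2 * m3 - m1 * (m1 + m2 + m3)) * r +
              (m1 + m3) ^ 2)) / (2 * (m1 + m2 + m3) * (r - 1))) ↔
      ((m2 ^ 2 + m1 * (m2 - m3)) * r ^ 2 + m2 * (m3 - m2 - m1) * r + m2 ^ 2 > 0)) := by
    intro r hr
    have hr0 : (0:ℝ) < r := by linarith
    have hr1 : (0:ℝ) < r - 1 := by linarith
    set A : ℝ := (m1 + m2) ^ 2 * r ^ 2 + 2 * (m2 * m3 - m1 * (m1 + m2 + m3)) * r +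
        (m1 + m3) ^ 2 with hAdef
    have hA : 0 < A := by
      nlinarith [sq_nonneg ((m1+m2)^2*r + (m2*m3 - m1*(m1+m2+m3))),
        mul_pos (mul_pos (mul_pos hm1 hm2) hm3) hn0, sq_nonneg (m1+m2), sq_nonneg (m1+m3)]
    set s : ℝ := Real.sqrt A with hsdef
    have hs : 0 < s := Real.sqrt_pos.mpr hA
    have hs2 : s ^ 2 = A := Real.sq_sqrt hA.le
    set L : ℝ := (m1+m2)*r^2 + (m3-m1-2*m2)*r + 2*m2 with hLdef
    set h : ℝ := (m2 ^ 2 + m1 * (m2 - m3)) * r ^ 2 + m2 * (m3 - m2 - m1) * r + m2 ^ 2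
      with hhdef
    have hid : r^2 * A - L^2 = 4 * (r-1) * h := by rw [hAdef, hLdef, hhdef]; ring
    have step1 : (1 + ((m1 + m2 + m3 - m3) * r - (m1 + m2 + m3) - m2 - s) /
          (2 * (m1 + m2 + m3)) <
        ((m1 + m2 + m3 - m3) * r - (m1 + m2 + m3) - m2 + s) /
          (2 * (m1 + m2 + m3) * (r - 1))) ↔ L < r * s := by
      rw [frac_iff (m1+m2+m3) _ _ r hn0 hr]
      constructor <;> intro hx <;> [nlinarith; nlinarith]
    rw [step1]
    have e2 : (r*s)^2 = r^2 * A := by rw [mul_pow, hs2]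
    constructor
    · intro hx
      rcases lt_or_ge L 0 with hL | hL
      · exact Lneg_h m1 m2 m3 r hm1 hm2 hm3 hr hL
      · have hsq : L^2 < r^2 * A := by
          rw [← e2]; exact pow_lt_pow_left₀ hx hL two_ne_zero
        have h4 : 0 < (r-1) * h := by linarith
        nlinarith [h4]
    · intro hh
      rcases lt_or_ge L 0 with hL | hL
      · exact hL.trans (mul_pos hr0 hs)
      · have hsq : L^2 < (r*s)^2 := by
          rw [e2]; nlinarith [mul_pos hr1 hh]
        exact lt_of_pow_lt_pow_left₀ 2 (mul_pos hr0 hs).le hsq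
  constructor
  · intro H r hr; exact (key r hr).mp (H r hr)
  · intro H r hr; exact (key r hr).mpr (H r hr)
end

section
/- If m_1 + m_3 < 3 m_2, then σ_1 < σ_2 for all roots r_1 < r_2 < r_3. -/
theorem stmt_11 (m1 m2 m3 : ℝ) (hm1 : 0 < m1) (hm2 : 0 < m2) (hm3 : 0 < m3)
    (hlt : m1 + m3 < 3 * m2)
    (r1 r2 r3 : ℝ) (h12 : r1 < r2) (h23 : r2 < r3)
    (x1 x2 : ℝ) (hx1 : x1 ∈ Set.Ioo r1 r2) (hx2 : x2 ∈ Set.Ioo r2 r3)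
    (hc1 : m1 / (x1 - r1) + m2 / (x1 - r2) + m3 / (x1 - r3) = 0)
    (hc2 : m1 / (x2 - r1) + m2 / (x2 - r2) + m3 / (x2 - r3) = 0)
    (σ1 σ2 : ℝ) (hσ1 : σ1 = (x1 - r1) / (r2 - r1)) (hσ2 : σ2 = (x2 - r2) / (r3 - r2)) :
    σ1 < σ2 := by
  obtain ⟨h1a, h1b⟩ := hx1
  obtain ⟨h2a, h2b⟩ := hx2
  have d1 : (0:ℝ) < x1 - r1 := by linarith
  have d2 : x1 - r2 ≠ 0 := by intro h; linarith [sub_eq_zero.mp h]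
  have d3 : x1 - r3 ≠ 0 := by intro h; linarith [sub_eq_zero.mp h]
  have e1 : x2 - r1 ≠ 0 := by intro h; linarith [sub_eq_zero.mp h]
  have e2 : x2 - r2 ≠ 0 := by intro h; linarith [sub_eq_zero.mp h]
  have e3 : x2 - r3 ≠ 0 := by intro h; linarith [sub_eq_zero.mp h]
  have hq1 : m1*(x1-r2)*(x1-r3) + m2*(x1-r1)*(x1-r3) + m3*(x1-r1)*(x1-r2) = 0 := by
    field_simp at hc1
    linear_combination hc1
  have hq2 : m1*(x2-r2)*(x2-r3) + m2*(x2-r1)*(x2-r3) + m3*(x2-r1)*(x2-r2) = 0 := by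
    field_simp at hc2
    linear_combination hc2
  have hxx : x1 - x2 ≠ 0 := by intro h; linarith [sub_eq_zero.mp h]
  have hfac : (x1-x2) * ((m1+m2+m3)*(x1+x2) - (m1*(r2+r3)+m2*(r1+r3)+m3*(r1+r2))) = 0 := by
    linear_combination hq1 - hq2
  have hS : (m1+m2+m3)*(x1+x2) = m1*(r2+r3)+m2*(r1+r3)+m3*(r1+r2) := by
    rcases mul_eq_zero.mp hfac with h | h
    · exact absurd h hxx
    · linarith
  have hP : (m1+m2+m3)*(x1*x2) = m1*(r2*r3)+m2*(r1*r3)+m3*(r1*r2) := by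
    linear_combination x1 * hS - hq1
  have key : (m1+m2+m3)*((x2-r2)*(r2-x1)) = m2*((r2-r1)*(r3-r2)) := by
    linear_combination r2 * hS - hP
  -- now finish
  have hn : (0:ℝ) < m1+m2+m3 := by linarith
  have hd1 : (0:ℝ) < r2 - r1 := by linarith
  have hd2 : (0:ℝ) < r3 - r2 := by linarith
  have hσ1lt : σ1 < 1 := by
    rw [hσ1]; rw [div_lt_one hd1]; linarith
  have hσ1pos : 0 < σ1 := by
    rw [hσ1]; positivity
  have hkey2 : σ2 * ((m1+m2+m3)*(1-σ1)) = m2 := by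
    rw [hσ1, hσ2]
    field_simp
    linear_combination key
  have h4 : m1+m2+m3 < 4*m2 := by linarith
  have hpos : 0 < (m1+m2+m3)*(1-σ1) := by
    apply mul_pos hn; linarith
  have hlt2 : σ1 * ((m1+m2+m3)*(1-σ1)) < m2 := by
    nlinarith [sq_nonneg (2*σ1 - 1)]
  have hfin : σ1 * ((m1+m2+m3)*(1-σ1)) < σ2 * ((m1+m2+m3)*(1-σ1)) := by
    rw [hkey2]; exact hlt2
  exact lt_of_mul_lt_mul_right hfin (le_of_lt hpos)
end

section
/- If m_1 = m_2 = m_3 = m > 0, then σ_1 < σ_2 for all roots r_1 < r_2 < r_3. -/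
set_option maxHeartbeats 1000000 in
theorem stmt_12 (m : ℝ) (hm : 0 < m)
    (r1 r2 r3 : ℝ) (h12 : r1 < r2) (h23 : r2 < r3)
    (x1 x2 : ℝ) (hx1 : x1 ∈ Set.Ioo r1 r2) (hx2 : x2 ∈ Set.Ioo r2 r3)
    (hc1 : (1:ℝ) / (x1 - r1) + (1:ℝ) / (x1 - r2) + (1:ℝ) / (x1 - r3) = 0)
    (hc2 : (1:ℝ) / (x2 - r1) + (1:ℝ) / (x2 - r2) + (1:ℝ) / (x2 - r3) = 0)
    (σ1 σ2 : ℝ) (hσ1 : σ1 = (x1 - r1) / (r2 - r1)) (hσ2 : σ2 = (x2 - r2) / (r3 - r2)) :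
    σ1 < σ2 := by
  obtain ⟨h1a, h1b⟩ := hx1
  obtain ⟨h2a, h2b⟩ := hx2
  have d1 : x1 - r1 > 0 := by linarith
  have d2 : x1 - r2 < 0 := by linarith
  have d3 : x1 - r3 < 0 := by linarith
  have e1 : x2 - r1 > 0 := by linarith
  have e2 : x2 - r2 > 0 := by linarith
  have e3 : x2 - r3 < 0 := by linarith
  have n1 : x1 - r1 ≠ 0 := ne_of_gt d1
  have n2 : x1 - r2 ≠ 0 := ne_of_lt d2
  have n3 : x1 - r3 ≠ 0 := ne_of_lt d3
  have m1 : x2 - r1 ≠ 0 := ne_of_gt e1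
  have m2 : x2 - r2 ≠ 0 := ne_of_gt e2
  have m3 : x2 - r3 ≠ 0 := ne_of_lt e3
  have q1 : (x1 - r2) * (x1 - r3) + (x1 - r1) * (x1 - r3) + (x1 - r1) * (x1 - r2) = 0 := by
    have h := hc1
    field_simp at h
    linarith [h]
  have q2 : (x2 - r2) * (x2 - r3) + (x2 - r1) * (x2 - r3) + (x2 - r1) * (x2 - r2) = 0 := by
    have h := hc2
    field_simp at h
    linarith [h]
  have hne : x1 ≠ x2 := by linarith
  have hsum : 3 * (x1 + x2) = 2 * (r1 + r2 + r3) := by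
    have h : (x1 - x2) * (3 * (x1 + x2) - 2 * (r1 + r2 + r3)) = 0 := by nlinarith [q1, q2]
    rcases mul_eq_zero.mp h with h' | h'
    · exact absurd h' (sub_ne_zero.mpr hne)
    · linarith
  have hprod : 3 * ((x1 - r1) * (x2 - r1)) = (r2 - r1) * (r3 - r1) := by nlinarith [q1, hsum]
  have key : (2*r3 - r2 - r1) * (x2 - r1) > (r3 - r1)^2 := by
    by_contra hcon
    push_neg at hcon
    have hW : (0:ℝ) ≤ (r3 - r1)^2 - (2*r3 - r2 - r1) * (x2 - r1) := by linarith
    nlinarith [q2, mul_nonneg hW e2.le, mul_nonneg hW (by linarith : (0:ℝ) ≤ r3 - x2),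
      mul_pos (sub_pos.mpr h12) (sub_pos.mpr h23), mul_pos e2 (sub_pos.mpr h23),
      mul_pos (sub_pos.mpr h12) e2]
  have step : 3 * ((x2 - r2) * (x2 - r1)) > (r3 - r1) * (r3 - r2) := by
    have heq : 3 * ((x2 - r2) * (x2 - r1)) - (2*r3 - r2 - r1) * (x2 - r1)
        - ((r3 - r1) * (r3 - r2) - (r3 - r1)^2)
        = (x2 - r2) * (x2 - r3) + (x2 - r1) * (x2 - r3) + (x2 - r1) * (x2 - r2) := by ring
    linarith [key, q2, heq]
  have final3 : 3 * ((x2 - r2) * (x2 - r1)) * (r2 - r1) > (r3 - r1) * (r3 - r2) * (r2 - r1) := by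
    have := mul_lt_mul_of_pos_right step (sub_pos.mpr h12)
    linarith
  have lhs3 : 3 * ((x1 - r1) * (x2 - r1)) * (r3 - r2) = (r2 - r1) * (r3 - r1) * (r3 - r2) := by
    linear_combination (r3 - r2) * hprod
  rw [hσ1, hσ2, div_lt_div_iff₀ (by linarith) (by linarith)]
  by_contra hcon
  push_neg at hcon
  nlinarith [final3, lhs3, mul_le_mul_of_nonneg_left hcon (by linarith : (0:ℝ) ≤ 3 * (x2 - r1))]
end

section
/- For m_1 = 6, m_2 = 1, m_3 = 2, one has σ_2 < σ_1 for all roots r_1 < r_2 < r_3. -/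
theorem stmt_13 
    (r1 r2 r3 : ℝ) (h12 : r1 < r2) (h23 : r2 < r3)
    (x1 x2 : ℝ) (hx1 : x1 ∈ Set.Ioo r1 r2) (hx2 : x2 ∈ Set.Ioo r2 r3)
    (hc1 : (6:ℝ) / (x1 - r1) + (1:ℝ) / (x1 - r2) + (2:ℝ) / (x1 - r3) = 0)
    (hc2 : (6:ℝ) / (x2 - r1) + (1:ℝ) / (x2 - r2) + (2:ℝ) / (x2 - r3) = 0)
    (σ1 σ2 : ℝ) (hσ1 : σ1 = (x1 - r1) / (r2 - r1)) (hσ2 : σ2 = (x2 - r2) / (r3 - r2)) :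
    σ2 < σ1 := by
  obtain ⟨ha1, hb1⟩ := hx1
  obtain ⟨ha2, hb2⟩ := hx2
  have d11 : x1 - r1 ≠ 0 := by linarith
  have d12 : x1 - r2 ≠ 0 := by linarith
  have d13 : x1 - r3 ≠ 0 := by linarith
  have d21 : x2 - r1 ≠ 0 := by linarith
  have d22 : x2 - r2 ≠ 0 := by linarith
  have d23 : x2 - r3 ≠ 0 := by linarith
  have E1 : 6*(x1-r2)*(x1-r3) + (x1-r1)*(x1-r3) + 2*(x1-r1)*(x1-r2) = 0 := by
    have h : ((6:ℝ) / (x1 - r1) + (1:ℝ) / (x1 - r2) + (2:ℝ) / (x1 - r3)) *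
        ((x1-r1)*(x1-r2)*(x1-r3)) = 0 := by rw [hc1]; ring
    field_simp at h
    linarith
  have E2 : 6*(x2-r2)*(x2-r3) + (x2-r1)*(x2-r3) + 2*(x2-r1)*(x2-r2) = 0 := by
    have h : ((6:ℝ) / (x2 - r1) + (1:ℝ) / (x2 - r2) + (2:ℝ) / (x2 - r3)) *
        ((x2-r1)*(x2-r2)*(x2-r3)) = 0 := by rw [hc2]; ring
    field_simp at h
    linarith
  have hne : x1 - x2 ≠ 0 := by intro h; linarith
  have hfac : (x1 - x2) * (9*(x1+x2) - (3*r1+8*r2+7*r3)) = 0 := by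
    linear_combination E1 - E2
  have hsum : 9*(x1+x2) = 3*r1+8*r2+7*r3 := by
    rcases mul_eq_zero.mp hfac with h | h
    · exact absurd h hne
    · linarith
  have hprod : 9*(x1*x2) = 6*r2*r3 + r1*r3 + 2*r1*r2 := by
    linear_combination x1 * hsum - E1
  set N : ℝ := -3*r1^2 - 5*r1*r2 - r2^2 + 2*r1*r3 + 7*r2*r3 with hN
  have key1 : N - 9*x2*(r3-r1) < 0 := by
    nlinarith [mul_pos (sub_pos.mpr h12) (sub_pos.mpr (h12.trans h23)),
      mul_pos (sub_pos.mpr ha2) (sub_pos.mpr (h12.trans h23))]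
  have key2 : (N - 9*x1*(r3-r1)) * (N - 9*x2*(r3-r1)) =
      (r2-r1)*(r3-r2)*(9*(r2-r1)^2 + 15*(r2-r1)*(r3-r2) + 5*(r3-r2)^2) := by
    linear_combination (9*(r3-r1)^2) * hprod - ((r3-r1)*N) * hsum
  have hpos : (0:ℝ) < (r2-r1)*(r3-r2)*(9*(r2-r1)^2 + 15*(r2-r1)*(r3-r2) + 5*(r3-r2)^2) := by
    have h1 : (0:ℝ) < r2 - r1 := by linarith
    have h2 : (0:ℝ) < r3 - r2 := by linarith
    positivity
  have key3 : N - 9*x1*(r3-r1) < 0 := by nlinarith [key1, key2, hpos]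
  have hF : (x2-r2)*(r2-r1) < (x1-r1)*(r3-r2) := by
    have hid : 9*((x1-r1)*(r3-r2) - (x2-r2)*(r2-r1)) = 9*x1*(r3-r1) - N := by
      linear_combination (-(r2-r1)) * hsum
    linarith
  rw [hσ1, hσ2]
  rw [div_lt_div_iff₀ (by linarith) (by linarith)]
  linarith
end

section
/- For N = 4, any ratio vector (u, v, w) satisfies v(1-u) > m_2/n, where n = m_1+m_2+m_3+m_4. -/
/-!
Clearing denominators, `Σ mⱼ/(x - rⱼ) = 0` becomes `N(x) = 0` for the cubic
`N(x) = Σ mⱼ ∏_{k ≠ j} (x - r_k)`, whose leading coefficient is `n`. Its roots are `x₁, x₂, x₃`, so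
`N(x) = n (x - x₁)(x - x₂)(x - x₃)`, and evaluating at `r₂` gives
`m₂ (r₂ - r₁)(r₃ - r₂)(r₄ - r₂) = n (r₂ - x₁)(x₂ - r₂)(x₃ - r₂)`.
Since `x₃ - r₂ < r₄ - r₂`, this yields `m₂ (r₂ - r₁)(r₃ - r₂) < n (r₂ - x₁)(x₂ - r₂)`,
which is the claim `v (1 - u) > m₂ / n`.
-/

section Field

variable {K : Type*} [Field K] (m1 m2 m3 m4 r1 r2 r3 r4 : K)

def logDerivNumerator (x : K) : K :=
  m1 * (x - r2) * (x - r3) * (x - r4) + m2 * (x - r1) * (x - r3) * (x - r4) +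
    m3 * (x - r1) * (x - r2) * (x - r4) + m4 * (x - r1) * (x - r2) * (x - r3)

variable {m1 m2 m3 m4 r1 r2 r3 r4}

lemma logDerivNumerator_eq_zero {x : K} (h1 : x ≠ r1) (h2 : x ≠ r2) (h3 : x ≠ r3) (h4 : x ≠ r4)
    (hx : m1 / (x - r1) + m2 / (x - r2) + m3 / (x - r3) + m4 / (x - r4) = 0) :
    logDerivNumerator m1 m2 m3 m4 r1 r2 r3 r4 x = 0 := by
  rw [← sub_ne_zero] at h1 h2 h3 h4
  field_simp at hx
  rw [logDerivNumerator]
  linear_combination hx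

lemma logDerivNumerator_eq_mul_of_roots {x1 x2 x3 : K} (h12 : x1 ≠ x2) (h13 : x1 ≠ x3)
    (h23 : x2 ≠ x3) (hx1 : logDerivNumerator m1 m2 m3 m4 r1 r2 r3 r4 x1 = 0)
    (hx2 : logDerivNumerator m1 m2 m3 m4 r1 r2 r3 r4 x2 = 0)
    (hx3 : logDerivNumerator m1 m2 m3 m4 r1 r2 r3 r4 x3 = 0) (y : K) :
    logDerivNumerator m1 m2 m3 m4 r1 r2 r3 r4 y =
      (m1 + m2 + m3 + m4) * (y - x1) * (y - x2) * (y - x3) := by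
  rw [← sub_ne_zero] at h12 h13 h23
  -- the difference is a quadratic in `y` vanishing at `x₁, x₂, x₃`: Lagrange interpolation
  have h : (logDerivNumerator m1 m2 m3 m4 r1 r2 r3 r4 y -
      (m1 + m2 + m3 + m4) * (y - x1) * (y - x2) * (y - x3)) * ((x1 - x2) * (x1 - x3) * (x2 - x3))
      = 0 := by
    unfold logDerivNumerator at *
    linear_combination ((y - x2) * (y - x3) * (x2 - x3)) * hx1 -
      ((y - x1) * (y - x3) * (x1 - x3)) * hx2 + ((y - x1) * (y - x2) * (x1 - x2)) * hx3
  simpa [sub_eq_zero, h12, h13, h23] using h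

end Field

lemma weight_mul_gaps_eq_of_critical_points {m1 m2 m3 m4 r1 r2 r3 r4 x1 x2 x3 : ℝ}
    (hx1 : x1 ∈ Set.Ioo r1 r2) (hx2 : x2 ∈ Set.Ioo r2 r3) (hx3 : x3 ∈ Set.Ioo r3 r4)
    (hc1 : m1 / (x1 - r1) + m2 / (x1 - r2) + m3 / (x1 - r3) + m4 / (x1 - r4) = 0)
    (hc2 : m1 / (x2 - r1) + m2 / (x2 - r2) + m3 / (x2 - r3) + m4 / (x2 - r4) = 0)
    (hc3 : m1 / (x3 - r1) + m2 / (x3 - r2) + m3 / (x3 - r3) + m4 / (x3 - r4) = 0) :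
    m2 * (r2 - r1) * (r3 - r2) * (r4 - r2) =
      (m1 + m2 + m3 + m4) * (r2 - x1) * (x2 - r2) * (x3 - r2) := by
  obtain ⟨h1l, h1r⟩ := hx1
  obtain ⟨h2l, h2r⟩ := hx2
  obtain ⟨h3l, h3r⟩ := hx3
  have N1 := logDerivNumerator_eq_zero h1l.ne' h1r.ne (by linarith : x1 < r3).ne
    (by linarith : x1 < r4).ne hc1
  have N2 := logDerivNumerator_eq_zero (by linarith : r1 < x2).ne' h2l.ne' h2r.ne
    (by linarith : x2 < r4).ne hc2
  have N3 := logDerivNumerator_eq_zero (by linarith : r1 < x3).ne' (by linarith : r2 < x3).ne'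
    h3l.ne' h3r.ne hc3
  have h := logDerivNumerator_eq_mul_of_roots (by linarith : x1 < x2).ne
    (by linarith : x1 < x3).ne (by linarith : x2 < x3).ne N1 N2 N3 r2
  unfold logDerivNumerator at h
  linear_combination h

theorem stmt_15_general (m1 m2 m3 m4 : ℝ) (hm2 : 0 < m2) (n : ℝ) (hn : n = m1 + m2 + m3 + m4) 
    (r1 r2 r3 r4 : ℝ)
    (x1 x2 x3 : ℝ) (hx1 : x1 ∈ Set.Ioo r1 r2) (hx2 : x2 ∈ Set.Ioo r2 r3)
    (hx3 : x3 ∈ Set.Ioo r3 r4)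
    (hc1 : m1 / (x1 - r1) + m2 / (x1 - r2) + m3 / (x1 - r3) + m4 / (x1 - r4) = 0)
    (hc2 : m1 / (x2 - r1) + m2 / (x2 - r2) + m3 / (x2 - r3) + m4 / (x2 - r4) = 0)
    (hc3 : m1 / (x3 - r1) + m2 / (x3 - r2) + m3 / (x3 - r3) + m4 / (x3 - r4) = 0)
    (σ1 σ2 : ℝ) (hσ1 : σ1 = (x1 - r1) / (r2 - r1))
    (hσ2 : σ2 = (x2 - r2) / (r3 - r2)) :
    σ2 * (1 - σ1) > m2 / n := by
  have key := weight_mul_gaps_eq_of_critical_points hx1 hx2 hx3 hc1 hc2 hc3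
  rw [← hn] at key
  obtain ⟨h1l, h1r⟩ := hx1
  obtain ⟨h2l, h2r⟩ := hx2
  obtain ⟨h3l, h3r⟩ := hx3
  have hd1 : 0 < r2 - r1 := by linarith
  have hd2 : 0 < r3 - r2 := by linarith
  have hd3 : 0 < r4 - r2 := by linarith
  have hA : 0 < (r2 - x1) * (x2 - r2) := mul_pos (by linarith) (by linarith)
  have hn_pos : 0 < n := by
    have hB : 0 < (r2 - x1) * (x2 - r2) * (x3 - r2) := mul_pos hA (by linarith)
    have : 0 < n * ((r2 - x1) * (x2 - r2) * (x3 - r2)) := by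
      linear_combination mul_pos (mul_pos (mul_pos hm2 hd1) hd2) hd3 + key
    exact pos_of_mul_pos_left this hB.le
  have hlt : m2 * ((r3 - r2) * (r2 - r1)) < n * ((r2 - x1) * (x2 - r2)) := by
    refine lt_of_mul_lt_mul_right ?_ hd3.le
    calc m2 * ((r3 - r2) * (r2 - r1)) * (r4 - r2)
        = n * ((r2 - x1) * (x2 - r2)) * (x3 - r2) := by linear_combination key
      _ < n * ((r2 - x1) * (x2 - r2)) * (r4 - r2) :=
        mul_lt_mul_of_pos_left (by linarith) (mul_pos hn_pos hA)
  have hσ : σ2 * (1 - σ1) = (r2 - x1) * (x2 - r2) / ((r3 - r2) * (r2 - r1)) := by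
    rw [hσ1, hσ2]
    field_simp
    ring
  rw [hσ, gt_iff_lt, div_lt_div_iff₀ hn_pos (mul_pos hd2 hd1)]
  linarith

theorem stmt_15 (m1 m2 m3 m4 : ℝ) (hm1 : 0 < m1) (hm2 : 0 < m2) (hm3 : 0 < m3)
    (hm4 : 0 < m4) (n : ℝ) (hn : n = m1 + m2 + m3 + m4) 
    (r1 r2 r3 r4 : ℝ) (h12 : r1 < r2) (h23 : r2 < r3) (h34 : r3 < r4)
    (x1 x2 x3 : ℝ) (hx1 : x1 ∈ Set.Ioo r1 r2) (hx2 : x2 ∈ Set.Ioo r2 r3)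
    (hx3 : x3 ∈ Set.Ioo r3 r4)
    (hc1 : m1 / (x1 - r1) + m2 / (x1 - r2) + m3 / (x1 - r3) + m4 / (x1 - r4) = 0)
    (hc2 : m1 / (x2 - r1) + m2 / (x2 - r2) + m3 / (x2 - r3) + m4 / (x2 - r4) = 0)
    (hc3 : m1 / (x3 - r1) + m2 / (x3 - r2) + m3 / (x3 - r3) + m4 / (x3 - r4) = 0)
    (σ1 σ2 σ3 : ℝ) (hσ1 : σ1 = (x1 - r1) / (r2 - r1))
    (hσ2 : σ2 = (x2 - r2) / (r3 - r2)) (hσ3 : σ3 = (x3 - r3) / (r4 - r3)) :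
    σ2 * (1 - σ1) > m2 / n :=
  stmt_15_general m1 m2 m3 m4 hm2 n hn r1 r2 r3 r4 x1 x2 x3 hx1 hx2 hx3 hc1 hc2 hc3 σ1 σ2 hσ1 hσ2
end

section
/- For N = 4, if m_1 + m_4 ≤ min(3m_2 - m_3, 3m_3 - m_2), then the ratios are monotone: σ_1 < σ_2 < σ_3 for all roots r_1 < r_2 < r_3 < r_4. -/
/-!
The logarithmic derivative `f = p'/p` is strictly decreasing on each gap `(rₖ, rₖ₊₁)`, so
`σ₁ < σ₂` amounts to `f y > 0` at the point `y = r₂ + σ₁ (r₃ - r₂)` of the second gap.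
Eliminating `m₁` through the critical equation at `x₁`, this positivity reduces to a polynomial
inequality whose slack is a square plus a multiple of `3 m₂ - m₁ - M`, where `M < m₃ + m₄` is the
effective mass of `r₃, r₄` seen from `x₁`.
The inequality `σ₂ < σ₃` is the same statement for the reflection `x ↦ -x`, which reverses the
roots and turns `σₖ` into `1 - σ₄₋ₖ`.
-/

open Set

lemma mul_mul_lt_of_add_lt_three_mul {ρ G M m₂ : ℝ} (hρ : 0 < ρ) (hG : 0 ≤ G) (hM : 0 ≤ M)
    (hm₂ : 0 < m₂) (h : ρ * (m₂ + G * M) + M < 3 * m₂) :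
    ρ * (ρ * G + 1) * M < m₂ * (ρ + 1) := by
  set P := m₂ + G * M
  have hP : 0 < P := by positivity
  have sos : P ^ 2 * (m₂ * (ρ + 1) - ρ * (ρ * G + 1) * M)
      = m₂ * (G * M + m₂ - ρ * P) ^ 2 + ρ * P * (3 * m₂ - ρ * P - M) * P := by ring
  have : 0 < P ^ 2 * (m₂ * (ρ + 1) - ρ * (ρ * G + 1) * M) := by
    have : 0 < 3 * m₂ - ρ * P - M := by linarith
    rw [sos]
    positivity
  nlinarith [pos_of_mul_pos_right this (by positivity)]

lemma critical_gap_bound {m₁ m₂ m₃ m₄ a b v w : ℝ} (hm₂ : 0 < m₂) (hm₃ : 0 < m₃)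
    (hm₄ : 0 < m₄) (ha : 0 < a) (hb : 0 < b) (hv : 0 < v) (hw : 0 < w)
    (hm : m₁ + m₃ + m₄ ≤ 3 * m₂)
    (hC : m₁ / a = m₂ / b + m₃ / (b + v) + m₄ / (b + v + w)) :
    a * (a + b + v) * (m₃ / (b + v) + m₄ / (b + v + w)) < m₂ * (a + b) := by
  have hM : m₃ + m₄ * ((b + v) / (b + v + w)) < m₃ + m₄ := by
    have : (b + v) / (b + v + w) < 1 := (div_lt_one (by positivity)).mpr (by linarith)
    nlinarith
  have hm₁ : a / b * (m₂ + b / (b + v) * (m₃ + m₄ * ((b + v) / (b + v + w)))) = m₁ := by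
    rw [div_eq_iff ha.ne'] at hC
    rw [hC]
    field_simp
    ring
  -- `M` is the effective mass of the two far roots, `m₃ + m₄` discounted by the extra gap `w`
  have := mul_mul_lt_of_add_lt_three_mul (ρ := a / b) (G := b / (b + v))
    (M := m₃ + m₄ * ((b + v) / (b + v + w))) (by positivity) (by positivity) (by positivity) hm₂
    (by rw [hm₁]; linarith)
  calc a * (a + b + v) * (m₃ / (b + v) + m₄ / (b + v + w))
      = b * (a / b * (a / b * (b / (b + v)) + 1) * (m₃ + m₄ * ((b + v) / (b + v + w)))) := by
        field_simp
        ring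
    _ < b * (m₂ * (a / b + 1)) := by gcongr
    _ = m₂ * (a + b) := by field_simp

/-- In the gaps `a = x₁ - r₁`, `b = r₂ - x₁`, `v = r₃ - r₂`, `w = r₄ - r₃`, the point
`r₂ + a / (a + b) * v` is the point of the second gap with the same relative position as `x₁`. -/
lemma transported_lt_of_critical {m₁ m₂ m₃ m₄ a b v w : ℝ} (hm₂ : 0 < m₂) (hm₃ : 0 < m₃)
    (hm₄ : 0 < m₄) (ha : 0 < a) (hb : 0 < b) (hv : 0 < v) (hw : 0 < w)
    (hm : m₁ + m₃ + m₄ ≤ 3 * m₂)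
    (hC : m₁ / a = m₂ / b + m₃ / (b + v) + m₄ / (b + v + w)) :
    m₃ / (v - a / (a + b) * v) + m₄ / (v - a / (a + b) * v + w)
      < m₁ / (a + b + a / (a + b) * v) + m₂ / (a / (a + b) * v) := by
  set K := m₃ / (b + v) + m₄ / (b + v + w) with hK
  have hT := critical_gap_bound hm₂ hm₃ hm₄ ha hb hv hw hm hC
  have hm₁ : m₁ = a * (m₂ / b + K) := by
    rw [div_eq_iff ha.ne'] at hC
    rw [hC, hK]
    ring
  have hgap : v - a / (a + b) * v = b * v / (a + b) := by
    field_simp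
    ring
  calc m₃ / (v - a / (a + b) * v) + m₄ / (v - a / (a + b) * v + w)
      ≤ (a + b) * (b + v) / (b * v) * K := by
        rw [hK, mul_add, hgap]
        gcongr ?_ + ?_
        · exact le_of_eq (by field_simp)
        · rw [div_le_iff₀ (by positivity)]
          field_simp
          nlinarith [mul_pos (mul_pos ha hw) hb, mul_pos (mul_pos hv hw) ha]
    _ < m₁ / (a + b + a / (a + b) * v) + m₂ / (a / (a + b) * v) := by
      have hdiff : m₁ / (a + b + a / (a + b) * v) + m₂ / (a / (a + b) * v)
          - (a + b) * (b + v) / (b * v) * K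
          = (a + b) * (a * v + b * (a + b)) / (a * b * v * ((a + b) ^ 2 + a * v))
            * (m₂ * (a + b) - a * (a + b + v) * K) := by
        rw [hm₁]
        field_simp
        ring
      have : 0 < m₂ * (a + b) - a * (a + b + v) * K := by linarith
      have : 0 < (a + b) * (a * v + b * (a + b)) / (a * b * v * ((a + b) ^ 2 + a * v))
          * (m₂ * (a + b) - a * (a + b + v) * K) := by positivity
      linarith

/-- The logarithmic derivative `p'/p` of `p = ∏ⱼ (x - rⱼ) ^ mⱼ`. -/
noncomputable def logDeriv4 (m₁ m₂ m₃ m₄ r₁ r₂ r₃ r₄ x : ℝ) : ℝ :=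
  m₁ / (x - r₁) + m₂ / (x - r₂) + m₃ / (x - r₃) + m₄ / (x - r₄)

lemma logDeriv4_neg (m₁ m₂ m₃ m₄ r₁ r₂ r₃ r₄ x : ℝ) :
    logDeriv4 m₄ m₃ m₂ m₁ (-r₄) (-r₃) (-r₂) (-r₁) (-x)
      = -logDeriv4 m₁ m₂ m₃ m₄ r₁ r₂ r₃ r₄ x := by
  simp only [logDeriv4, neg_sub_neg, ← neg_sub x, div_neg]
  ring

lemma div_sub_lt_div_sub {m r x y : ℝ} (hm : 0 < m) (hxy : x < y)
    (h : 0 < (x - r) * (y - r)) :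
    m / (y - r) < m / (x - r) := by
  have hx : x - r ≠ 0 := left_ne_zero_of_mul h.ne'
  have hy : y - r ≠ 0 := right_ne_zero_of_mul h.ne'
  have : m / (y - r) - m / (x - r) = m * (x - y) / ((x - r) * (y - r)) := by
    field_simp
    ring
  have : m * (x - y) / ((x - r) * (y - r)) < 0 :=
    div_neg_of_neg_of_pos (mul_neg_of_pos_of_neg hm (by linarith)) h
  linarith

lemma logDeriv4_strictAntiOn {m₁ m₂ m₃ m₄ r₁ r₂ r₃ r₄ : ℝ} (hm₁ : 0 < m₁) (hm₂ : 0 < m₂)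
    (hm₃ : 0 < m₃) (hm₄ : 0 < m₄) (h₁₂ : r₁ ≤ r₂) (h₃₄ : r₃ ≤ r₄) :
    StrictAntiOn (logDeriv4 m₁ m₂ m₃ m₄ r₁ r₂ r₃ r₄) (Ioo r₂ r₃) := by
  rintro x ⟨hx₂, hx₃⟩ y ⟨hy₂, hy₃⟩ hxy
  have t₁ := div_sub_lt_div_sub (r := r₁) hm₁ hxy (by nlinarith)
  have t₂ := div_sub_lt_div_sub (r := r₂) hm₂ hxy (by nlinarith)
  have t₃ := div_sub_lt_div_sub (r := r₃) hm₃ hxy (by nlinarith)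
  have t₄ := div_sub_lt_div_sub (r := r₄) hm₄ hxy (by nlinarith)
  simp only [logDeriv4]
  linarith

lemma ratio_lt_ratio_of_logDeriv4_eq_zero {m₁ m₂ m₃ m₄ r₁ r₂ r₃ r₄ x₁ x₂ : ℝ} (hm₁ : 0 < m₁)
    (hm₂ : 0 < m₂) (hm₃ : 0 < m₃) (hm₄ : 0 < m₄) (hm : m₁ + m₃ + m₄ ≤ 3 * m₂) (h₃₄ : r₃ < r₄)
    (hx₁ : x₁ ∈ Ioo r₁ r₂) (hx₂ : x₂ ∈ Ioo r₂ r₃)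
    (hc₁ : logDeriv4 m₁ m₂ m₃ m₄ r₁ r₂ r₃ r₄ x₁ = 0)
    (hc₂ : logDeriv4 m₁ m₂ m₃ m₄ r₁ r₂ r₃ r₄ x₂ = 0) :
    (x₁ - r₁) / (r₂ - r₁) < (x₂ - r₂) / (r₃ - r₂) := by
  obtain ⟨hx₁₁, hx₁₂⟩ := hx₁
  set s := (x₁ - r₁) / (r₂ - r₁)
  have hs : s ∈ Ioo 0 1 := ⟨div_pos (by linarith) (by linarith),
    (div_lt_one (by linarith)).mpr (by linarith)⟩
  set y := r₂ + s * (r₃ - r₂)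
  have hy : y ∈ Ioo r₂ r₃ := ⟨by nlinarith [hs.1, hx₂.1, hx₂.2], by nlinarith [hs.2, hx₂.1, hx₂.2]⟩
  have hC : m₁ / (x₁ - r₁) = m₂ / (r₂ - x₁) + m₃ / (r₂ - x₁ + (r₃ - r₂))
      + m₄ / (r₂ - x₁ + (r₃ - r₂) + (r₄ - r₃)) := by
    rw [show r₂ - x₁ + (r₃ - r₂) + (r₄ - r₃) = -(x₁ - r₄) by ring,
      show r₂ - x₁ + (r₃ - r₂) = -(x₁ - r₃) by ring, ← neg_sub x₁ r₂]
    simp only [logDeriv4, div_neg] at hc₁ ⊢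
    linarith
  have hy_pos : 0 < logDeriv4 m₁ m₂ m₃ m₄ r₁ r₂ r₃ r₄ y := by
    have := transported_lt_of_critical hm₂ hm₃ hm₄ (by linarith) (by linarith)
      (sub_pos.mpr (hx₂.1.trans hx₂.2)) (by linarith) hm hC
    rw [show x₁ - r₁ + (r₂ - x₁) = r₂ - r₁ by ring] at this
    rw [logDeriv4, show y - r₁ = r₂ - r₁ + s * (r₃ - r₂) by ring,
      show y - r₂ = s * (r₃ - r₂) by ring,
      show y - r₃ = -(r₃ - r₂ - s * (r₃ - r₂)) by ring,
      show y - r₄ = -(r₃ - r₂ - s * (r₃ - r₂) + (r₄ - r₃)) by ring, div_neg, div_neg]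
    linarith
  have hanti : StrictAntiOn (logDeriv4 m₁ m₂ m₃ m₄ r₁ r₂ r₃ r₄) (Ioo r₂ r₃) :=
    logDeriv4_strictAntiOn hm₁ hm₂ hm₃ hm₄ (by linarith) h₃₄.le
  have hyx : y < x₂ := (hanti.lt_iff_gt hx₂ hy).mp (by rwa [hc₂])
  rw [lt_div_iff₀ (by linarith [hx₂.1, hx₂.2])]
  linarith

lemma neg_ratio_eq_one_sub {l h : ℝ} (x : ℝ) (hlh : l < h) :
    (-x - -h) / (-l - -h) = 1 - (x - l) / (h - l) := by
  have : h - l ≠ 0 := (sub_pos.mpr hlh).ne'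
  rw [show -x - -h = h - x by ring, show -l - -h = h - l by ring]
  field_simp
  ring

theorem stmt_16_general (m1 m2 m3 m4 : ℝ) (hm1 : 0 < m1) (hm2 : 0 < m2) (hm3 : 0 < m3)
    (hm4 : 0 < m4) (hmm : m1 + m4 ≤ min (3 * m2 - m3) (3 * m3 - m2))
    (r1 r2 r3 r4 : ℝ) (h12 : r1 < r2) (h23 : r2 < r3) (h34 : r3 < r4)
    (x1 x2 x3 : ℝ) (hx1 : x1 ∈ Set.Ioo r1 r2) (hx2 : x2 ∈ Set.Ioo r2 r3)
    (hx3 : x3 ∈ Set.Ioo r3 r4)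
    (hc1 : m1 / (x1 - r1) + m2 / (x1 - r2) + m3 / (x1 - r3) + m4 / (x1 - r4) = 0)
    (hc2 : m1 / (x2 - r1) + m2 / (x2 - r2) + m3 / (x2 - r3) + m4 / (x2 - r4) = 0)
    (hc3 : m1 / (x3 - r1) + m2 / (x3 - r2) + m3 / (x3 - r3) + m4 / (x3 - r4) = 0)
    (σ1 σ2 σ3 : ℝ) (hσ1 : σ1 = (x1 - r1) / (r2 - r1))
    (hσ2 : σ2 = (x2 - r2) / (r3 - r2)) (hσ3 : σ3 = (x3 - r3) / (r4 - r3)) :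
    σ1 < σ2 ∧ σ2 < σ3 := by
  have hdom2 : m1 + m3 + m4 ≤ 3 * m2 := by linarith [min_le_left (3 * m2 - m3) (3 * m3 - m2)]
  have hdom3 : m4 + m2 + m1 ≤ 3 * m3 := by linarith [min_le_right (3 * m2 - m3) (3 * m3 - m2)]
  refine ⟨?_, ?_⟩
  · rw [hσ1, hσ2]
    exact ratio_lt_ratio_of_logDeriv4_eq_zero hm1 hm2 hm3 hm4 hdom2 h34 hx1 hx2 hc1 hc2
  · have := ratio_lt_ratio_of_logDeriv4_eq_zero hm4 hm3 hm2 hm1 hdom3 (neg_lt_neg h12)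
      (x₁ := -x3) (x₂ := -x2) ⟨neg_lt_neg hx3.2, neg_lt_neg hx3.1⟩
      ⟨neg_lt_neg hx2.2, neg_lt_neg hx2.1⟩
      (by rw [logDeriv4_neg]; exact neg_eq_zero.mpr hc3)
      (by rw [logDeriv4_neg]; exact neg_eq_zero.mpr hc2)
    rw [neg_ratio_eq_one_sub x3 h34, neg_ratio_eq_one_sub x2 h23] at this
    linarith

theorem stmt_16 (m1 m2 m3 m4 : ℝ) (hm1 : 0 < m1) (hm2 : 0 < m2) (hm3 : 0 < m3)
    (hm4 : 0 < m4) (n : ℝ) (hn : n = m1 + m2 + m3 + m4) (hmm : m1 + m4 ≤ min (3 * m2 - m3) (3 * m3 - m2))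
    (r1 r2 r3 r4 : ℝ) (h12 : r1 < r2) (h23 : r2 < r3) (h34 : r3 < r4)
    (x1 x2 x3 : ℝ) (hx1 : x1 ∈ Set.Ioo r1 r2) (hx2 : x2 ∈ Set.Ioo r2 r3)
    (hx3 : x3 ∈ Set.Ioo r3 r4)
    (hc1 : m1 / (x1 - r1) + m2 / (x1 - r2) + m3 / (x1 - r3) + m4 / (x1 - r4) = 0)
    (hc2 : m1 / (x2 - r1) + m2 / (x2 - r2) + m3 / (x2 - r3) + m4 / (x2 - r4) = 0)
    (hc3 : m1 / (x3 - r1) + m2 / (x3 - r2) + m3 / (x3 - r3) + m4 / (x3 - r4) = 0)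
    (σ1 σ2 σ3 : ℝ) (hσ1 : σ1 = (x1 - r1) / (r2 - r1))
    (hσ2 : σ2 = (x2 - r2) / (r3 - r2)) (hσ3 : σ3 = (x3 - r3) / (r4 - r3)) :
    σ1 < σ2 ∧ σ2 < σ3 :=
  stmt_16_general m1 m2 m3 m4 hm1 hm2 hm3 hm4 hmm r1 r2 r3 r4 h12 h23 h34 x1 x2 x3 hx1 hx2 hx3 hc1
    hc2 hc3 σ1 σ2 σ3 hσ1 hσ2 hσ3
end

section
/- If m_1 = m_2 = m_3 = m_4 = m > 0, then σ_1 < σ_2 < σ_3 for all roots r_1 < r_2 < r_3 < r_4. -/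
/-!
Write `a, b, c` for the gaps `r₂ - r₁, r₃ - r₂, r₄ - r₃`. On `(r₁, r₂)` the sum `Σ 1/(x - rⱼ)` is
strictly decreasing, so `σ₁ < s` as soon as the sum is negative at `r₁ + s a`. At the midpoint the
two nearest terms cancel, which gives `σ₁ < 1/2`, and by the reflection `x ↦ -x` also `1/2 < σ₃`.
If `σ₂ = t ≤ 1/2`, the equation at `x₂` forces the first gap to be large,
`(1 - 2t)(2b + c) ≤ 2(1 - t)(4t - 1) a`, and with the harmonic–arithmetic mean inequality for the
two far terms this makes the sum negative at `r₁ + t a`, i.e. `σ₁ < σ₂`. The case `σ₂ > 1/2` is the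
mirror image.
-/

open Set

noncomputable def invSubSum (r₁ r₂ r₃ r₄ x : ℝ) : ℝ :=
  1 / (x - r₁) + 1 / (x - r₂) + 1 / (x - r₃) + 1 / (x - r₄)

noncomputable def gapRatio (l r x : ℝ) : ℝ := (x - l) / (r - l)

lemma invSubSum_neg (r₁ r₂ r₃ r₄ x : ℝ) :
    invSubSum (-r₄) (-r₃) (-r₂) (-r₁) (-x) = -invSubSum r₁ r₂ r₃ r₄ x := by
  simp only [invSubSum, neg_sub_neg, ← neg_sub x, one_div_neg_eq_neg_one_div]
  ring

lemma gapRatio_neg {l r : ℝ} (h : l ≠ r) (x : ℝ) :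
    gapRatio (-r) (-l) (-x) = 1 - gapRatio l r x := by
  have : r - l ≠ 0 := sub_ne_zero.2 h.symm
  simp only [gapRatio, neg_sub_neg]
  field_simp
  ring

lemma gapRatio_lt_iff {l r : ℝ} (h : l < r) (x s : ℝ) :
    gapRatio l r x < s ↔ x < l + s * (r - l) := by
  rw [gapRatio, div_lt_iff₀ (sub_pos.2 h)]
  constructor <;> intro <;> linarith

lemma add_gapRatio_mul {l r : ℝ} (h : l ≠ r) (x : ℝ) : l + gapRatio l r x * (r - l) = x := by
  rw [gapRatio, div_mul_cancel₀ _ (sub_ne_zero.2 h.symm)]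
  ring

lemma invSubSum_strictAntiOn {r₁ r₂ r₃ r₄ : ℝ} (h₂₃ : r₂ < r₃) (h₃₄ : r₃ < r₄) :
    StrictAntiOn (invSubSum r₁ r₂ r₃ r₄) (Ioo r₁ r₂) := by
  intro x ⟨hx₁, _⟩ y ⟨_, hy₂⟩ hxy
  have left (r : ℝ) (hr : r < x) : 1 / (y - r) < 1 / (x - r) :=
    one_div_lt_one_div_of_lt (by linarith) (by linarith)
  have right (r : ℝ) (hr : y < r) : 1 / (y - r) < 1 / (x - r) :=
    one_div_lt_one_div_of_neg_of_lt (by linarith) (by linarith)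
  unfold invSubSum
  gcongr ?_ + ?_ + ?_ + ?_
  exacts [left _ hx₁, right _ hy₂, right _ (by linarith), right _ (by linarith)]

lemma four_div_add_lt_one_div_add_one_div {p q : ℝ} (hp : 0 < p) (hq : 0 < q) (hpq : p ≠ q) :
    4 / (p + q) < 1 / p + 1 / q := by
  rw [div_add_div _ _ hp.ne' hq.ne', div_lt_div_iff₀ (by positivity) (by positivity)]
  nlinarith [sq_pos_of_ne_zero (sub_ne_zero.2 hpq)]

lemma first_gap_lower_bound {a b c t : ℝ} (ha : 0 < a) (hb : 0 < b) (hc : 0 < c)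
    (ht₀ : 0 < t) (ht : t ≤ 1 / 2)
    (h : 1 / (a + t * b) + 1 / (t * b) = 1 / ((1 - t) * b) + 1 / ((1 - t) * b + c)) :
    (1 - 2 * t) * (2 * b + c) ≤ 2 * (1 - t) * (4 * t - 1) * a := by
  set u := 1 - 2 * t with hu
  have hu₀ : 0 ≤ u := by linarith
  have ht₁ : 0 < 1 - t := by linarith
  -- the equation, cleared of denominators and solved for `a`
  have hP : a * (t * (1 - t) * b - u * ((1 - t) * b + c))
      = t * b * (2 * u * (1 - t) * b + (2 - 3 * t) * c) := by
    field_simp at h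
    linear_combination -h
  have hZ : 0 < t * (1 - t) * b - u * ((1 - t) * b + c) := by
    refine pos_of_mul_pos_right ?_ ha.le
    rw [hP]
    have : 0 < 2 - 3 * t := by linarith
    positivity
  refine le_of_mul_le_mul_right ?_ hZ
  rw [mul_assoc _ a, hP, ← sub_nonneg]
  -- with `u = 1 - 2t ≥ 0` all coefficients of this quadratic form in `b, c` are nonnegative
  have key : 2 * (1 - t) * (4 * t - 1) * (t * b * (2 * u * (1 - t) * b + (2 - 3 * t) * c))
        - u * (2 * b + c) * (t * (1 - t) * b - u * ((1 - t) * b + c))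
      = u ^ 2 * (1 + u) * (2 * u ^ 2 - u + 1) / 2 * b ^ 2
        + (1 / 4 + 3 * u ^ 2 / 4 + u ^ 3 / 2 + 3 * u ^ 4 / 2) * b * c + u ^ 2 * c ^ 2 := by
    rw [hu]; ring
  rw [key]
  have : 0 ≤ 2 * u ^ 2 - u + 1 := by nlinarith [sq_nonneg (u - 1 / 4)]
  positivity

lemma first_gap_sum_neg_of_lower_bound {a b c t : ℝ} (ha : 0 < a) (hb : 0 < b) (hc : 0 < c)
    (ht₀ : 0 < t) (ht₁ : t < 1)
    (hbound : (1 - 2 * t) * (2 * b + c) ≤ 2 * (1 - t) * (4 * t - 1) * a) :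
    1 / (t * a) - 1 / ((1 - t) * a) - 1 / ((1 - t) * a + b)
      - 1 / ((1 - t) * a + b + c) < 0 := by
  have h1t : 0 < 1 - t := by linarith
  have hE : 0 < (1 - t) * a + b := by positivity
  have : 1 / (t * a) - 1 / ((1 - t) * a)
      < 1 / ((1 - t) * a + b) + 1 / ((1 - t) * a + b + c) :=
    calc 1 / (t * a) - 1 / ((1 - t) * a) = (1 - 2 * t) / (t * (1 - t) * a) := by
          field_simp
          ring
      _ ≤ 4 / (((1 - t) * a + b) + ((1 - t) * a + b + c)) := by
          rw [div_le_div_iff₀ (by positivity) (by positivity)]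
          nlinarith
      _ < _ := four_div_add_lt_one_div_add_one_div hE (by positivity) (by linarith)
  linarith

theorem gapRatio_lt_gapRatio_of_le_half {r₁ r₂ r₃ r₄ x₁ x₂ : ℝ} (h₃₄ : r₃ < r₄)
    (hx₁ : x₁ ∈ Ioo r₁ r₂) (hx₂ : x₂ ∈ Ioo r₂ r₃)
    (hc₁ : invSubSum r₁ r₂ r₃ r₄ x₁ = 0) (hc₂ : invSubSum r₁ r₂ r₃ r₄ x₂ = 0)
    (hhalf : gapRatio r₂ r₃ x₂ ≤ 1 / 2) :
    gapRatio r₁ r₂ x₁ < gapRatio r₂ r₃ x₂ := by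
  obtain ⟨hr₁x₁, hx₁r₂⟩ := hx₁
  obtain ⟨hr₂x₂, hx₂r₃⟩ := hx₂
  set t := gapRatio r₂ r₃ x₂
  have ha : 0 < r₂ - r₁ := by linarith
  have hb : 0 < r₃ - r₂ := by linarith
  have hc : 0 < r₄ - r₃ := by linarith
  have ht₀ : 0 < t := div_pos (by linarith) hb
  have hx₂t : x₂ = r₂ + t * (r₃ - r₂) := (add_gapRatio_mul (by linarith) x₂).symm
  have H₂ : 1 / ((r₂ - r₁) + t * (r₃ - r₂)) + 1 / (t * (r₃ - r₂))
      = 1 / ((1 - t) * (r₃ - r₂)) + 1 / ((1 - t) * (r₃ - r₂) + (r₄ - r₃)) := by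
    rw [invSubSum, hx₂t] at hc₂
    rw [show r₂ + t * (r₃ - r₂) - r₃ = -((1 - t) * (r₃ - r₂)) by ring,
      show r₂ + t * (r₃ - r₂) - r₄ = -((1 - t) * (r₃ - r₂) + (r₄ - r₃)) by ring,
      one_div_neg_eq_neg_one_div, one_div_neg_eq_neg_one_div] at hc₂
    linear_combination hc₂
  set y := r₁ + t * (r₂ - r₁)
  have hy : y ∈ Ioo r₁ r₂ := ⟨lt_add_of_pos_right _ (mul_pos ht₀ ha), by nlinarith⟩
  have hFy : invSubSum r₁ r₂ r₃ r₄ y < 0 := by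
    have := first_gap_sum_neg_of_lower_bound ha hb hc ht₀ (by linarith)
      (first_gap_lower_bound ha hb hc ht₀ hhalf H₂)
    rw [invSubSum, show y - r₁ = t * (r₂ - r₁) by ring,
      show y - r₂ = -((1 - t) * (r₂ - r₁)) by ring,
      show y - r₃ = -((1 - t) * (r₂ - r₁) + (r₃ - r₂)) by ring,
      show y - r₄ = -((1 - t) * (r₂ - r₁) + (r₃ - r₂) + (r₄ - r₃)) by ring]
    simp only [one_div_neg_eq_neg_one_div]
    linarith
  rw [gapRatio_lt_iff (by linarith)]
  exact ((invSubSum_strictAntiOn (by linarith) h₃₄).lt_iff_gt hy ⟨hr₁x₁, hx₁r₂⟩).1 (hc₁ ▸ hFy)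

theorem gapRatio_lt_half {r₁ r₂ r₃ r₄ x₁ : ℝ} (h₂₃ : r₂ < r₃) (h₃₄ : r₃ < r₄)
    (hx₁ : x₁ ∈ Ioo r₁ r₂) (hc₁ : invSubSum r₁ r₂ r₃ r₄ x₁ = 0) :
    gapRatio r₁ r₂ x₁ < 1 / 2 := by
  have h₁₂ : r₁ < r₂ := hx₁.1.trans hx₁.2
  set mid := r₁ + 1 / 2 * (r₂ - r₁) with hmid
  have hmid_mem : mid ∈ Ioo r₁ r₂ := ⟨by linarith, by linarith⟩
  have hFmid : invSubSum r₁ r₂ r₃ r₄ mid < 0 := by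
    rw [invSubSum, show mid - r₂ = -(mid - r₁) by ring, one_div_neg_eq_neg_one_div]
    have h₃ : 1 / (mid - r₃) < 0 := one_div_neg.2 (by linarith [hmid_mem.2])
    have h₄ : 1 / (mid - r₄) < 0 := one_div_neg.2 (by linarith [hmid_mem.2])
    linarith
  rw [gapRatio_lt_iff h₁₂]
  exact ((invSubSum_strictAntiOn h₂₃ h₃₄).lt_iff_gt hmid_mem hx₁).1 (hc₁ ▸ hFmid)

theorem stmt_17_general
    (r1 r2 r3 r4 : ℝ) (h12 : r1 < r2) (h23 : r2 < r3) (h34 : r3 < r4)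
    (x1 x2 x3 : ℝ) (hx1 : x1 ∈ Set.Ioo r1 r2) (hx2 : x2 ∈ Set.Ioo r2 r3)
    (hx3 : x3 ∈ Set.Ioo r3 r4)
    (hc1 : 1 / (x1 - r1) + 1 / (x1 - r2) + 1 / (x1 - r3) + 1 / (x1 - r4) = 0)
    (hc2 : 1 / (x2 - r1) + 1 / (x2 - r2) + 1 / (x2 - r3) + 1 / (x2 - r4) = 0)
    (hc3 : 1 / (x3 - r1) + 1 / (x3 - r2) + 1 / (x3 - r3) + 1 / (x3 - r4) = 0)
    (σ1 σ2 σ3 : ℝ) (hσ1 : σ1 = (x1 - r1) / (r2 - r1))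
    (hσ2 : σ2 = (x2 - r2) / (r3 - r2)) (hσ3 : σ3 = (x3 - r3) / (r4 - r3)) :
    σ1 < σ2 ∧ σ2 < σ3 := by
  change invSubSum r1 r2 r3 r4 x1 = 0 at hc1
  change invSubSum r1 r2 r3 r4 x2 = 0 at hc2
  change invSubSum r1 r2 r3 r4 x3 = 0 at hc3
  change σ1 = gapRatio r1 r2 x1 at hσ1
  change σ2 = gapRatio r2 r3 x2 at hσ2
  change σ3 = gapRatio r3 r4 x3 at hσ3
  subst hσ1 hσ2 hσ3
  -- reflecting `r ↦ -r` reverses the roots and replaces each `σₖ` by `1 - σ₄₋ₖ`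
  have hc₂' : invSubSum (-r4) (-r3) (-r2) (-r1) (-x2) = 0 := by rw [invSubSum_neg, hc2, neg_zero]
  have hc₃' : invSubSum (-r4) (-r3) (-r2) (-r1) (-x3) = 0 := by rw [invSubSum_neg, hc3, neg_zero]
  have hx₂' : -x2 ∈ Ioo (-r3) (-r2) := neg_mem_Ioo_iff.2 (by simpa using hx2)
  have hx₃' : -x3 ∈ Ioo (-r4) (-r3) := neg_mem_Ioo_iff.2 (by simpa using hx3)
  have hσ₁ := gapRatio_lt_half h23 h34 hx1 hc1
  have hσ₃ := gapRatio_lt_half (neg_lt_neg h23) (neg_lt_neg h12) hx₃' hc₃'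
  rw [gapRatio_neg h34.ne] at hσ₃
  rcases le_or_gt (gapRatio r2 r3 x2) (1 / 2) with hσ₂ | hσ₂
  · exact ⟨gapRatio_lt_gapRatio_of_le_half h34 hx1 hx2 hc1 hc2 hσ₂, by linarith⟩
  · have hσ₂₃ := gapRatio_lt_gapRatio_of_le_half (neg_lt_neg h12) hx₃' hx₂' hc₃' hc₂'
      (by rw [gapRatio_neg h23.ne]; linarith)
    rw [gapRatio_neg h34.ne, gapRatio_neg h23.ne] at hσ₂₃
    constructor <;> linarith

/-- If `m₁ = m₂ = m₃ = m₄ = m > 0`, then `σ₁ < σ₂ < σ₃`. -/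
theorem stmt_17 (m : ℝ) (hm : 0 < m)
    (r1 r2 r3 r4 : ℝ) (h12 : r1 < r2) (h23 : r2 < r3) (h34 : r3 < r4)
    (x1 x2 x3 : ℝ) (hx1 : x1 ∈ Set.Ioo r1 r2) (hx2 : x2 ∈ Set.Ioo r2 r3)
    (hx3 : x3 ∈ Set.Ioo r3 r4)
    (hc1 : 1 / (x1 - r1) + 1 / (x1 - r2) + 1 / (x1 - r3) + 1 / (x1 - r4) = 0)
    (hc2 : 1 / (x2 - r1) + 1 / (x2 - r2) + 1 / (x2 - r3) + 1 / (x2 - r4) = 0)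
    (hc3 : 1 / (x3 - r1) + 1 / (x3 - r2) + 1 / (x3 - r3) + 1 / (x3 - r4) = 0)
    (σ1 σ2 σ3 : ℝ) (hσ1 : σ1 = (x1 - r1) / (r2 - r1))
    (hσ2 : σ2 = (x2 - r2) / (r3 - r2)) (hσ3 : σ3 = (x3 - r3) / (r4 - r3)) :
    σ1 < σ2 ∧ σ2 < σ3 :=
  stmt_17_general r1 r2 r3 r4 h12 h23 h34 x1 x2 x3 hx1 hx2 hx3 hc1 hc2 hc3 σ1 σ2 σ3 hσ1 hσ2 hσ3
end

section
/- For N = 4 with r_1 = -1, r_2 = 0, r_3 = r, r_4 = s (0 < r < s), a ratio vector (u, v, w) determines r and s uniquely: Dr = D_1 and Ds = D_2, where D_1 = (nu - m_1)(m_2 - nvw(1-u)), D_2 = (nu - m_1)·nv(1-u)(1-w), and D is the 2×2 determinant with rows (n(w-v) - m_3, n(1-w) - m_4) and (n(u-1)v(1-w), n(u-1)vw + m_2); moreover D > 0, 0 < D_1 < D_2. -/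
/-!
Clearing denominators, the critical points `x₁, x₂, x₃` are the three roots of a cubic with
leading coefficient `n`, so Vieta's formulas express `x₁ + x₂ + x₃` and `x₁ x₂ x₃` through
`r, s` and the `mᵢ`. Substituting `x₁ = u - 1`, `x₂ = v r`, `x₃ = r + (s - r) w` turns these two
relations into a linear system in `(r, s)` with determinant `D`, which Cramer's rule solves as
`D r = D₁`, `D s = D₂`. Evaluating the cubic at `-1` gives `n u (1 + x₂)(1 + x₃) = m₁ (1 + r)(1 + s)`,
hence `n u > m₁`; the second equation of the system forces the other factor of `D₁` to be
positive; and then `D > 0` and `D₂ - D₁ = D (s - r) > 0` follow.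
-/

theorem cubic_vieta {R : Type*} [CommRing R] [IsDomain R] {a b c d x y z : R}
    (hxy : x ≠ y) (hxz : x ≠ z) (hyz : y ≠ z)
    (hx : a * x ^ 3 + b * x ^ 2 + c * x + d = 0) (hy : a * y ^ 3 + b * y ^ 2 + c * y + d = 0)
    (hz : a * z ^ 3 + b * z ^ 2 + c * z + d = 0) :
    b = -a * (x + y + z) ∧ c = a * (x * y + x * z + y * z) ∧ d = -a * (x * y * z) := by
  have hxy' : a * (x ^ 2 + x * y + y ^ 2) + b * (x + y) + c = 0 := by
    apply mul_right_cancel₀ (sub_ne_zero.mpr hxy)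
    linear_combination hx - hy
  have hyz' : a * (y ^ 2 + y * z + z ^ 2) + b * (y + z) + c = 0 := by
    apply mul_right_cancel₀ (sub_ne_zero.mpr hyz)
    linear_combination hy - hz
  have hb : b = -a * (x + y + z) := by
    apply mul_right_cancel₀ (sub_ne_zero.mpr hxz)
    linear_combination hxy' - hyz'
  have hc : c = a * (x * y + x * z + y * z) := by linear_combination hxy' - (x + y) * hb
  exact ⟨hb, hc, by linear_combination hx - x ^ 2 * hb - x * hc⟩

theorem cubic_eq_zero_of_sum_div_eq_zero {m1 m2 m3 m4 r s x : ℝ} (h1 : x + 1 ≠ 0) (h2 : x ≠ 0)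
    (h3 : x - r ≠ 0) (h4 : x - s ≠ 0)
    (h : m1 / (x + 1) + m2 / x + m3 / (x - r) + m4 / (x - s) = 0) :
    (m1 + m2 + m3 + m4) * x ^ 3
      + (m2 + m3 + m4 - (m1 + m2) * (r + s) - m3 * s - m4 * r) * x ^ 2
      + (m1 * r * s + m2 * (r * s - r - s) - m3 * s - m4 * r) * x + m2 * r * s = 0 := by
  field_simp at h
  linear_combination h

theorem critical_points_vieta {m1 m2 m3 m4 r s x1 x2 x3 : ℝ}
    (hx1 : x1 ∈ Set.Ioo (-1 : ℝ) 0) (hx2 : x2 ∈ Set.Ioo 0 r) (hx3 : x3 ∈ Set.Ioo r s)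
    (hc1 : m1 / (x1 + 1) + m2 / x1 + m3 / (x1 - r) + m4 / (x1 - s) = 0)
    (hc2 : m1 / (x2 + 1) + m2 / x2 + m3 / (x2 - r) + m4 / (x2 - s) = 0)
    (hc3 : m1 / (x3 + 1) + m2 / x3 + m3 / (x3 - r) + m4 / (x3 - s) = 0) :
    (m1 + m2 + m3 + m4) * (x1 + x2 + x3) =
        (m1 + m2) * (r + s) + m3 * s + m4 * r - (m2 + m3 + m4) ∧
      (m1 + m2 + m3 + m4) * (x1 * x2 * x3) = -(m2 * r * s) ∧
      (m1 + m2 + m3 + m4) * ((x1 + 1) * (x2 + 1) * (x3 + 1)) = m1 * (r + 1) * (s + 1) := by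
  obtain ⟨hx1l, hx1r⟩ := hx1
  obtain ⟨hx2l, hx2r⟩ := hx2
  obtain ⟨hx3l, hx3r⟩ := hx3
  have e1 := cubic_eq_zero_of_sum_div_eq_zero (by linarith) hx1r.ne (by linarith) (by linarith) hc1
  have e2 := cubic_eq_zero_of_sum_div_eq_zero (by linarith) hx2l.ne' (by linarith) (by linarith) hc2
  have e3 := cubic_eq_zero_of_sum_div_eq_zero (by linarith) (by linarith) (by linarith)
    (by linarith) hc3
  obtain ⟨hb, hc, hd⟩ := cubic_vieta (by linarith) (by linarith) (by linarith) e1 e2 e3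
  refine ⟨by linear_combination hb, by linear_combination hd, ?_⟩
  linear_combination hb - hc + hd

theorem cramer_two {R : Type*} [CommRing R] {a b c d e f x y : R}
    (h1 : a * x + b * y = e) (h2 : c * x + d * y = f) :
    (a * d - b * c) * x = e * d - b * f ∧ (a * d - b * c) * y = a * f - c * e :=
  ⟨by linear_combination d * h1 - b * h2, by linear_combination a * h2 - c * h1⟩

theorem ratio_linear_system {n m1 m2 m3 m4 r s x1 x2 x3 u v w : ℝ} (hr : r ≠ 0) (hrs : s ≠ r)
    (hn : n = m1 + m2 + m3 + m4) (hu : u = x1 + 1) (hv : v = x2 / r) (hw : w = (x3 - r) / (s - r))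
    (hsum : n * (x1 + x2 + x3) = (m1 + m2) * (r + s) + m3 * s + m4 * r - (m2 + m3 + m4))
    (hprod : n * (x1 * x2 * x3) = -(m2 * r * s)) :
    (n * (w - v) - m3) * r + (n * (1 - w) - m4) * s = n * u - m1 ∧
      n * (u - 1) * v * (1 - w) * r + (n * (u - 1) * v * w + m2) * s = 0 := by
  have ex2 : x2 = v * r := by rw [hv]; field_simp
  have ex3 : x3 = r + (s - r) * w := by rw [hw]; field_simp [sub_ne_zero.mpr hrs]; ring
  refine ⟨by linear_combination -hsum - n * hu + n * ex2 + n * ex3 - (1 - r - s) * hn, ?_⟩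
  apply mul_right_cancel₀ hr
  linear_combination hprod + n * x2 * x3 * hu - n * (u - 1) * x3 * ex2 - n * (u - 1) * v * r * ex3

theorem stmt_19_general (m1 m2 m3 m4 : ℝ) (hm1 : 0 < m1) (n : ℝ) (hn : n = m1 + m2 + m3 + m4)
    (r s : ℝ) (hr : 0 < r) (hrs : r < s)
    (x1 x2 x3 : ℝ) (hx1 : x1 ∈ Set.Ioo (-1 : ℝ) 0) (hx2 : x2 ∈ Set.Ioo 0 r)
    (hx3 : x3 ∈ Set.Ioo r s)
    (hc1 : m1 / (x1 + 1) + m2 / x1 + m3 / (x1 - r) + m4 / (x1 - s) = 0)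
    (hc2 : m1 / (x2 + 1) + m2 / x2 + m3 / (x2 - r) + m4 / (x2 - s) = 0)
    (hc3 : m1 / (x3 + 1) + m2 / x3 + m3 / (x3 - r) + m4 / (x3 - s) = 0)
    (u v w : ℝ) (hu : u = x1 + 1) (hv : v = x2 / r) (hw : w = (x3 - r) / (s - r))
    (D D1 D2 : ℝ)
    (hD : D = (n * (w - v) - m3) * (n * (u - 1) * v * w + m2) -
      (n * (1 - w) - m4) * (n * (u - 1) * v * (1 - w)))
    (hD1 : D1 = (n * u - m1) * (m2 - n * v * w * (1 - u)))
    (hD2 : D2 = (n * u - m1) * (n * v * (1 - u) * (1 - w))) :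
    D * r = D1 ∧ D * s = D2 ∧ 0 < D ∧ 0 < D1 ∧ D1 < D2 := by
  obtain ⟨hsum, hprod, hshift⟩ := critical_points_vieta hx1 hx2 hx3 hc1 hc2 hc3
  rw [← hn] at hsum hprod hshift
  obtain ⟨hI, hII⟩ := ratio_linear_system hr.ne' hrs.ne' hn hu hv hw hsum hprod
  obtain ⟨hDr, hDs⟩ := cramer_two hI hII
  replace hDr : D * r = D1 := by rw [hD, hD1]; linear_combination hDr
  replace hDs : D * s = D2 := by rw [hD, hD2]; linear_combination hDs
  obtain ⟨hx1l, hx1r⟩ := hx1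
  obtain ⟨hx2l, hx2r⟩ := hx2
  obtain ⟨hx3l, hx3r⟩ := hx3
  have hu0 : 0 < u := by linarith
  have hnu : m1 < n * u := by
    have hP : 0 < (x2 + 1) * (x3 + 1) := mul_pos (by linarith) (by linarith)
    have hPQ : (x2 + 1) * (x3 + 1) < (r + 1) * (s + 1) := by gcongr; linarith
    refine lt_of_mul_lt_mul_right ?_ hP.le
    calc m1 * ((x2 + 1) * (x3 + 1)) < m1 * ((r + 1) * (s + 1)) := by gcongr
      _ = n * u * ((x2 + 1) * (x3 + 1)) := by rw [hu]; linear_combination -hshift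
  have hn0 : 0 < n := pos_of_mul_pos_left (hm1.trans hnu) hu0.le
  have hfactor : 0 < m2 - n * v * w * (1 - u) := by
    have hv0 : 0 < v := by rw [hv]; positivity
    have hw1 : 0 < 1 - w := by rw [hw, sub_pos, div_lt_one (by linarith)]; linarith
    have hu1 : 0 < 1 - u := by linarith
    have : 0 < n * (1 - u) * v * (1 - w) * r := by positivity
    exact pos_of_mul_pos_left (by linear_combination this - hII) (hr.trans hrs).le
  have hD1 : 0 < D1 := by rw [hD1]; exact mul_pos (by linarith) hfactor
  have hD0 : 0 < D := pos_of_mul_pos_left (hDr ▸ hD1) hr.le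
  exact ⟨hDr, hDs, hD0, hD1, by linear_combination mul_pos hD0 (sub_pos.mpr hrs) - hDr + hDs⟩

/-- For `N = 4` with roots `-1 < 0 < r < s`, the ratio vector `(u,v,w)` determines
`r` and `s` via `D r = D₁`, `D s = D₂`, with `D > 0` and `0 < D₁ < D₂`. -/
theorem stmt_19 (m1 m2 m3 m4 : ℝ) (hm1 : 0 < m1) (hm2 : 0 < m2) (hm3 : 0 < m3)
    (hm4 : 0 < m4) (n : ℝ) (hn : n = m1 + m2 + m3 + m4)
    (r s : ℝ) (hr : 0 < r) (hrs : r < s)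
    (x1 x2 x3 : ℝ) (hx1 : x1 ∈ Set.Ioo (-1 : ℝ) 0) (hx2 : x2 ∈ Set.Ioo 0 r)
    (hx3 : x3 ∈ Set.Ioo r s)
    (hc1 : m1 / (x1 + 1) + m2 / x1 + m3 / (x1 - r) + m4 / (x1 - s) = 0)
    (hc2 : m1 / (x2 + 1) + m2 / x2 + m3 / (x2 - r) + m4 / (x2 - s) = 0)
    (hc3 : m1 / (x3 + 1) + m2 / x3 + m3 / (x3 - r) + m4 / (x3 - s) = 0)
    (u v w : ℝ) (hu : u = x1 + 1) (hv : v = x2 / r) (hw : w = (x3 - r) / (s - r))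
    (D D1 D2 : ℝ)
    (hD : D = (n * (w - v) - m3) * (n * (u - 1) * v * w + m2) -
      (n * (1 - w) - m4) * (n * (u - 1) * v * (1 - w)))
    (hD1 : D1 = (n * u - m1) * (m2 - n * v * w * (1 - u)))
    (hD2 : D2 = (n * u - m1) * (n * v * (1 - u) * (1 - w))) :
    D * r = D1 ∧ D * s = D2 ∧ 0 < D ∧ 0 < D1 ∧ D1 < D2 :=
  stmt_19_general m1 m2 m3 m4 hm1 n hn r s hr hrs x1 x2 x3 hx1 hx2 hx3 hc1 hc2 hc3 u v w hu hv hw D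
    D1 D2 hD hD1 hD2
end
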